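/- Let G be a connected finite simple graph on the vertex set {1, …, N} with edge set E and Laplacian matrix L, let M be a positive integer and γ ∈ (0, 1). Let c be a random variable taking values in the maps E → {1, …, M} such that, almost surely, any two distinct adjacent edges receive different colors, and ℙ(c(e) = k) = 1/M for every edge e and every k ∈ {1, …, M}; let L^k be the Laplacian of the spanning subgraph of G consisting of the edges colored k. Let λ₂ = min{ zᵀ L z : ‖z‖ = 1, 𝟏ᵀz = 0 } be the second smallest eigenvalue of L. Then for every k ∈ {1, …, M} and every z ∈ ℝ^N with 𝟏ᵀz = 0, E[ ‖(I_N − γ·L^k) z‖² ] = zᵀ ( I_N − (2/M)(γ − γ²)·L ) z ≤ ( 1 − (2/M)(γ − γ²)·λ₂ ) · ‖z‖². -/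

import Mathlib

open Matrix MeasureTheory

/-- The Laplacian matrix of a finite simple graph on `Fin N`. -/
def lapMat {N : ℕ} (G : SimpleGraph (Fin N)) [DecidableRel G.Adj] :
    Matrix (Fin N) (Fin N) ℝ :=
  Matrix.of fun i j =>
    if i = j then (G.degree i : ℝ) else if G.Adj i j then -1 else 0

/-- Given a coloring `col` of the edges of `G` with colors in `Fin M`, the channel
Laplacian `L^k` is the Laplacian of the spanning subgraph of `G` consisting of the
edges colored `k`. -/
def chLap {N M : ℕ} (G : SimpleGraph (Fin N)) [DecidableRel G.Adj]
    (col : Sym2 (Fin N) → Fin M) (k : Fin M) :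
    Matrix (Fin N) (Fin N) ℝ :=
  Matrix.of fun i j =>
    if i = j then ∑ v ∈ G.neighborFinset i, (if col s(i, v) = k then (1 : ℝ) else 0)
    else if G.Adj i j ∧ col s(i, j) = k then -1 else 0

/-!
For a proper edge coloring every color class `H` is a matching, so its Laplacian satisfies
`L_H² = 2 L_H`; for the symmetric matrix `I - γ L_H` this gives
`‖(I - γ L_H) z‖² = ‖z‖² - 2 (γ - γ²) zᵀ L_H z` pointwise. The quadratic form
`zᵀ L_H z = ½ ∑_{i ∼_H j} (z i - z j)²` is linear in the edge indicators, each of mean `1/M`,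
so its expectation is `zᵀ L z / M`. The bound follows from `λ₂ ‖z‖² ≤ zᵀ L z` for `z ⊥ 𝟏`,
obtained by rescaling `z` to a unit vector.
-/

namespace Matrix

variable {n R : Type*} [Fintype n] [DecidableEq n] [CommRing R]

lemma dotProduct_one_sub_smul_mulVec (A : Matrix n n R) (a : R) (z : n → R) :
    z ⬝ᵥ (1 - a • A) *ᵥ z = z ⬝ᵥ z - a * (z ⬝ᵥ A *ᵥ z) := by
  rw [sub_mulVec, one_mulVec, dotProduct_sub, smul_mulVec, dotProduct_smul, smul_eq_mul]

lemma dotProduct_self_one_sub_smul_mulVec {B : Matrix n n R} (hB : B.IsSymm)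
    (hB2 : B * B = 2 • B) (γ : R) (z : n → R) :
    (1 - γ • B) *ᵥ z ⬝ᵥ (1 - γ • B) *ᵥ z = z ⬝ᵥ z - 2 * (γ - γ ^ 2) * (z ⬝ᵥ B *ᵥ z) := by
  have hsq : (1 - γ • B) * (1 - γ • B) = 1 - (2 * (γ - γ ^ 2)) • B := by
    rw [sub_mul, mul_sub, mul_sub, smul_mul_smul_comm, hB2, one_mul, mul_one, one_mul]
    module
  have hsymm : (1 - γ • B)ᵀ = 1 - γ • B := by
    rw [transpose_sub, transpose_smul, hB.eq, transpose_one]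
  rw [dotProduct_mulVec, ← mulVec_transpose, hsymm, mulVec_mulVec, dotProduct_comm, hsq,
    dotProduct_one_sub_smul_mulVec]

end Matrix

lemma sum_sq_eq_dotProduct {n : Type*} [Fintype n] (z : n → ℝ) : ∑ i, z i ^ 2 = z ⬝ᵥ z := by
  simp [dotProduct, sq]

lemma mul_dotProduct_self_le_of_mem_lowerBounds {n : Type*} [Fintype n] {A : Matrix n n ℝ}
    {lam : ℝ} (hlam : lam ∈ lowerBounds {x : ℝ | ∃ z : n → ℝ,
        (∑ i, z i) = 0 ∧ (∑ i, z i ^ 2) = 1 ∧ x = z ⬝ᵥ A *ᵥ z})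
    {z : n → ℝ} (hz : ∑ i, z i = 0) : lam * (z ⬝ᵥ z) ≤ z ⬝ᵥ A *ᵥ z := by
  have hnonneg : 0 ≤ z ⬝ᵥ z := Finset.sum_nonneg fun i _ => mul_self_nonneg (z i)
  rcases hnonneg.eq_or_lt with hz0 | hpos
  · simp [dotProduct_self_eq_zero.mp hz0.symm]
  set s := √(z ⬝ᵥ z)
  have hs : s ≠ 0 := (Real.sqrt_pos.mpr hpos).ne'
  have hs2 : s ^ 2 = z ⬝ᵥ z := Real.sq_sqrt hpos.le
  have hunit := hlam ⟨s⁻¹ • z, by simp [← Finset.mul_sum, hz], by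
    rw [sum_sq_eq_dotProduct, smul_dotProduct, dotProduct_smul, smul_eq_mul, smul_eq_mul, ← hs2]
    field_simp, rfl⟩
  rw [mulVec_smul, smul_dotProduct, dotProduct_smul, smul_eq_mul, smul_eq_mul] at hunit
  rw [← hs2]
  calc lam * s ^ 2 ≤ s⁻¹ * (s⁻¹ * (z ⬝ᵥ A *ᵥ z)) * s ^ 2 := by gcongr
    _ = z ⬝ᵥ A *ᵥ z := by field_simp

namespace SimpleGraph

section MaxDegreeOne

variable {V : Type*} [Fintype V] (H : SimpleGraph V) [DecidableRel H.Adj]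

lemma degree_eq_one_of_adj (hH : ∀ v, H.degree v ≤ 1) {i j : V} (hij : H.Adj i j) :
    H.degree i = 1 :=
  le_antisymm (hH i) (H.degree_pos_iff_exists_adj i |>.mpr ⟨j, hij⟩)

lemma eq_of_adj_of_adj (hH : ∀ v, H.degree v ≤ 1) {u i j : V} (hi : H.Adj u i)
    (hj : H.Adj u j) : i = j :=
  Finset.card_le_one.mp (H.card_neighborFinset_eq_degree u ▸ hH u) i
    ((H.mem_neighborFinset u i).mpr hi) j ((H.mem_neighborFinset u j).mpr hj)

variable [DecidableEq V] {R : Type*} [Ring R]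

lemma degMatrix_mul_adjMatrix_of_degree_le_one (hH : ∀ v, H.degree v ≤ 1) :
    H.degMatrix R * H.adjMatrix R = H.adjMatrix R := by
  ext i j
  rw [degMatrix, diagonal_mul, adjMatrix_apply]
  by_cases hij : H.Adj i j
  · simp [hij, H.degree_eq_one_of_adj hH hij]
  · simp [hij]

lemma adjMatrix_mul_degMatrix_of_degree_le_one (hH : ∀ v, H.degree v ≤ 1) :
    H.adjMatrix R * H.degMatrix R = H.adjMatrix R := by
  ext i j
  rw [degMatrix, mul_diagonal, adjMatrix_apply]
  by_cases hij : H.Adj i j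
  · simp [hij, H.degree_eq_one_of_adj hH hij.symm]
  · simp [hij]

lemma adjMatrix_mul_self_of_degree_le_one (hH : ∀ v, H.degree v ≤ 1) :
    H.adjMatrix R * H.adjMatrix R = H.degMatrix R := by
  ext i j
  by_cases hij : i = j
  · subst hij
    rw [adjMatrix_mul_self_apply_self, degMatrix, diagonal_apply_eq]
  · rw [adjMatrix_mul_apply, degMatrix, diagonal_apply_ne _ hij]
    refine Finset.sum_eq_zero fun u hu => ?_
    have hui : H.Adj u i := ((H.mem_neighborFinset i u).mp hu).symm
    simp only [adjMatrix_apply, ite_eq_right_iff]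
    exact fun huj => absurd (H.eq_of_adj_of_adj hH hui huj) hij

lemma lapMatrix_mul_self_of_degree_le_one (hH : ∀ v, H.degree v ≤ 1) :
    H.lapMatrix R * H.lapMatrix R = 2 • H.lapMatrix R := by
  have hDD : H.degMatrix R * H.degMatrix R = H.degMatrix R := by
    nth_rewrite 1 [← H.adjMatrix_mul_self_of_degree_le_one hH]
    rw [mul_assoc, H.adjMatrix_mul_degMatrix_of_degree_le_one hH,
      H.adjMatrix_mul_self_of_degree_le_one hH]
  simp only [lapMatrix, sub_mul, mul_sub, hDD, H.adjMatrix_mul_degMatrix_of_degree_le_one hH,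
    H.degMatrix_mul_adjMatrix_of_degree_le_one hH, H.adjMatrix_mul_self_of_degree_le_one hH]
  abel

end MaxDegreeOne

section EdgeColoring

variable {V α : Type*} (G : SimpleGraph V)

def edgeColorClass (col : Sym2 V → α) (k : α) : SimpleGraph V where
  Adj i j := G.Adj i j ∧ col s(i, j) = k
  symm := ⟨fun _ j h => ⟨h.1.symm, Sym2.eq_swap (a := j) ▸ h.2⟩⟩
  loopless := ⟨fun _ h => G.irrefl h.1⟩

@[simp]
lemma edgeColorClass_adj {col : Sym2 V → α} {k : α} {i j : V} :
    (G.edgeColorClass col k).Adj i j ↔ G.Adj i j ∧ col s(i, j) = k :=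
  Iff.rfl

instance [DecidableRel G.Adj] [DecidableEq α] (col : Sym2 V → α) (k : α) :
    DecidableRel (G.edgeColorClass col k).Adj :=
  fun i j => inferInstanceAs (Decidable (G.Adj i j ∧ col s(i, j) = k))

def IsProperEdgeColoring (col : Sym2 V → α) : Prop :=
  ∀ e ∈ G.edgeSet, ∀ e' ∈ G.edgeSet, e ≠ e' → (∃ v : V, v ∈ e ∧ v ∈ e') → col e ≠ col e'

variable {G}

lemma IsProperEdgeColoring.degree_edgeColorClass_le_one [Fintype V] {col : Sym2 V → α}
    (hcol : G.IsProperEdgeColoring col) (k : α) [DecidableRel (G.edgeColorClass col k).Adj]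
    (v : V) : (G.edgeColorClass col k).degree v ≤ 1 := by
  rw [← card_neighborFinset_eq_degree, Finset.card_le_one]
  intro u hu w hw
  simp only [mem_neighborFinset, edgeColorClass_adj] at hu hw
  by_contra huw
  exact hcol _ hu.1 _ hw.1 (fun h => huw (Sym2.congr_right.mp h))
    ⟨v, Sym2.mem_mk_left v u, Sym2.mem_mk_left v w⟩ (hu.2.trans hw.2.symm)

end EdgeColoring

section RandomEdgeColoring

variable {V α Ω : Type*} (G : SimpleGraph V) {c : Ω → Sym2 V → α} {k : α}

lemma ite_edgeColorClass_adj_eq_indicator [DecidableRel G.Adj] [DecidableEq α] (i j : V)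
    (x : ℝ) :
    (fun ω => if (G.edgeColorClass (c ω) k).Adj i j then x else 0)
      = {ω | (G.edgeColorClass (c ω) k).Adj i j}.indicator fun _ => x := by
  ext ω
  simp [Set.indicator_apply]

variable [MeasurableSpace Ω] {μ : Measure Ω}

lemma measurableSet_edgeColorClass_adj (hc : ∀ e ∈ G.edgeSet, MeasurableSet {ω | c ω e = k})
    (i j : V) : MeasurableSet {ω | (G.edgeColorClass (c ω) k).Adj i j} := by
  by_cases h : G.Adj i j
  · simpa [h] using hc _ h
  · simp [h]

variable [DecidableRel G.Adj] [DecidableEq α]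

lemma integrable_ite_edgeColorClass_adj [IsFiniteMeasure μ]
    (hc : ∀ e ∈ G.edgeSet, MeasurableSet {ω | c ω e = k}) (i j : V) (x : ℝ) :
    Integrable (fun ω => if (G.edgeColorClass (c ω) k).Adj i j then x else 0) μ := by
  rw [ite_edgeColorClass_adj_eq_indicator]
  exact (integrable_const x).indicator (G.measurableSet_edgeColorClass_adj hc i j)

lemma integral_ite_edgeColorClass_adj {p : ℝ}
    (hc : ∀ e ∈ G.edgeSet, MeasurableSet {ω | c ω e = k})
    (hp : ∀ e ∈ G.edgeSet, μ.real {ω | c ω e = k} = p) (i j : V) (x : ℝ) :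
    ∫ ω, (if (G.edgeColorClass (c ω) k).Adj i j then x else 0) ∂μ
      = if G.Adj i j then p * x else 0 := by
  rw [ite_edgeColorClass_adj_eq_indicator,
    integral_indicator_const _ (G.measurableSet_edgeColorClass_adj hc i j), smul_eq_mul]
  by_cases h : G.Adj i j
  · simp [h, hp s(i, j) h]
  · simp [h]

variable [Fintype V] [DecidableEq V]

lemma integrable_dotProduct_lapMatrix_edgeColorClass [IsFiniteMeasure μ]
    (hc : ∀ e ∈ G.edgeSet, MeasurableSet {ω | c ω e = k}) (z : V → ℝ) :
    Integrable (fun ω => z ⬝ᵥ (G.edgeColorClass (c ω) k).lapMatrix ℝ *ᵥ z) μ := by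
  simp_rw [← toLinearMap₂'_apply', lapMatrix_toLinearMap₂']
  exact (integrable_finsetSum _ fun i _ => integrable_finsetSum _ fun j _ =>
    G.integrable_ite_edgeColorClass_adj hc i j _).div_const 2

lemma integral_dotProduct_lapMatrix_edgeColorClass [IsFiniteMeasure μ] {p : ℝ}
    (hc : ∀ e ∈ G.edgeSet, MeasurableSet {ω | c ω e = k})
    (hp : ∀ e ∈ G.edgeSet, μ.real {ω | c ω e = k} = p) (z : V → ℝ) :
    ∫ ω, z ⬝ᵥ (G.edgeColorClass (c ω) k).lapMatrix ℝ *ᵥ z ∂μ = p * (z ⬝ᵥ G.lapMatrix ℝ *ᵥ z) := by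
  simp_rw [← toLinearMap₂'_apply', lapMatrix_toLinearMap₂']
  rw [integral_div, integral_finsetSum _ fun i _ => integrable_finsetSum _ fun j _ =>
    G.integrable_ite_edgeColorClass_adj hc i j _, mul_div_assoc', Finset.mul_sum]
  congr 1
  refine Finset.sum_congr rfl fun i _ => ?_
  rw [integral_finsetSum _ fun j _ => G.integrable_ite_edgeColorClass_adj hc i j _,
    Finset.mul_sum]
  refine Finset.sum_congr rfl fun j _ => ?_
  rw [G.integral_ite_edgeColorClass_adj hc hp, mul_ite, mul_zero]

end RandomEdgeColoring

end SimpleGraph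

lemma lapMat_eq_lapMatrix {N : ℕ} (G : SimpleGraph (Fin N)) [DecidableRel G.Adj] :
    lapMat G = G.lapMatrix ℝ := by
  ext i j
  by_cases hij : i = j
  · subst hij
    simp [lapMat, SimpleGraph.lapMatrix, SimpleGraph.degMatrix]
  · simp only [lapMat, SimpleGraph.lapMatrix, SimpleGraph.degMatrix, of_apply, Matrix.sub_apply,
      diagonal_apply_ne _ hij, if_neg hij, SimpleGraph.adjMatrix_apply]
    split_ifs <;> simp

lemma chLap_eq_lapMatrix {N M : ℕ} (G : SimpleGraph (Fin N)) [DecidableRel G.Adj]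
    (col : Sym2 (Fin N) → Fin M) (k : Fin M) :
    chLap G col k = (G.edgeColorClass col k).lapMatrix ℝ := by
  ext i j
  by_cases hij : i = j
  · subst hij
    simp [chLap, SimpleGraph.lapMatrix, SimpleGraph.degMatrix,
      ← SimpleGraph.card_neighborFinset_eq_degree, SimpleGraph.neighborFinset_eq_filter,
      Finset.filter_filter]
  · simp only [chLap, SimpleGraph.lapMatrix, SimpleGraph.degMatrix, of_apply, Matrix.sub_apply,
      diagonal_apply_ne _ hij, if_neg hij, SimpleGraph.adjMatrix_apply,
      SimpleGraph.edgeColorClass_adj]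
    split_ifs <;> simp

theorem expected_contraction_general
    {N : ℕ} (G : SimpleGraph (Fin N)) [DecidableRel G.Adj]
    (M : ℕ) (γ : ℝ) (hγ : γ ∈ Set.Ioo (0 : ℝ) 1)
    {Ω : Type*} [MeasurableSpace Ω] (μ : Measure Ω) [IsProbabilityMeasure μ]
    (c : Ω → Sym2 (Fin N) → Fin M)
    (hc_meas : ∀ e : Sym2 (Fin N), Measurable fun ω => c ω e)
    (hc_proper : ∀ᵐ ω ∂μ, ∀ e ∈ G.edgeSet, ∀ e' ∈ G.edgeSet, e ≠ e' →
      (∃ v : Fin N, v ∈ e ∧ v ∈ e') → c ω e ≠ c ω e')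
    (hc_unif : ∀ e ∈ G.edgeSet, ∀ k : Fin M,
      μ {ω | c ω e = k} = 1 / (M : ENNReal))
    (lam2 : ℝ)
    (hlam2 : IsLeast {x : ℝ | ∃ z : Fin N → ℝ,
        (∑ i, z i) = 0 ∧ (∑ i, z i ^ 2) = 1 ∧ x = z ⬝ᵥ (lapMat G).mulVec z} lam2) :
    ∀ (k : Fin M) (z : Fin N → ℝ), (∑ i, z i) = 0 →
      (∫ ω, ∑ i, (((1 : Matrix (Fin N) (Fin N) ℝ) - γ • chLap G (c ω) k).mulVec z i) ^ 2 ∂μ)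
        = z ⬝ᵥ ((1 : Matrix (Fin N) (Fin N) ℝ)
            - ((2 / (M : ℝ)) * (γ - γ ^ 2)) • lapMat G).mulVec z ∧
      z ⬝ᵥ ((1 : Matrix (Fin N) (Fin N) ℝ)
            - ((2 / (M : ℝ)) * (γ - γ ^ 2)) • lapMat G).mulVec z
        ≤ (1 - (2 / (M : ℝ)) * (γ - γ ^ 2) * lam2) * (∑ i, z i ^ 2) := by
  intro k z hz
  have hc : ∀ e ∈ G.edgeSet, MeasurableSet {ω | c ω e = k} :=
    fun e _ => hc_meas e (measurableSet_singleton k)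
  have hp : ∀ e ∈ G.edgeSet, μ.real {ω | c ω e = k} = (M : ℝ)⁻¹ := fun e he => by
    simp [measureReal_def, hc_unif e he k]
  have hpointwise : (fun ω => ∑ i, ((1 - γ • chLap G (c ω) k) *ᵥ z) i ^ 2) =ᵐ[μ]
      fun ω => z ⬝ᵥ z - 2 * (γ - γ ^ 2) * (z ⬝ᵥ (G.edgeColorClass (c ω) k).lapMatrix ℝ *ᵥ z) := by
    filter_upwards [hc_proper] with ω (hω : G.IsProperEdgeColoring (c ω))
    rw [sum_sq_eq_dotProduct, chLap_eq_lapMatrix]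
    exact dotProduct_self_one_sub_smul_mulVec (SimpleGraph.isSymm_lapMatrix ℝ _)
      (SimpleGraph.lapMatrix_mul_self_of_degree_le_one _ (hω.degree_edgeColorClass_le_one k)) γ z
  refine ⟨?_, ?_⟩
  · rw [integral_congr_ae hpointwise, integral_sub (integrable_const _)
      ((G.integrable_dotProduct_lapMatrix_edgeColorClass hc z).const_mul _), integral_const,
      integral_const_mul, G.integral_dotProduct_lapMatrix_edgeColorClass hc hp,
      dotProduct_one_sub_smul_mulVec, lapMat_eq_lapMatrix]
    simp only [probReal_univ, one_smul]
    ring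
  · have hrayleigh := mul_dotProduct_self_le_of_mem_lowerBounds hlam2.2 hz
    have hcoef : 0 ≤ 2 / (M : ℝ) * (γ - γ ^ 2) :=
      mul_nonneg (by positivity) (by nlinarith [hγ.1, hγ.2])
    rw [dotProduct_one_sub_smul_mulVec, sum_sq_eq_dotProduct]
    linarith [mul_le_mul_of_nonneg_left hrayleigh hcoef]

/-- Let `G` be a connected finite simple graph on `{1, …, N}` with
Laplacian `L`, let `M ≥ 1`, `γ ∈ (0,1)`, and let `c` be a random proper edge coloring with
uniform marginals `ℙ(c(e) = k) = 1/M`; let `L^k` be the channel Laplacians.  Let `λ₂` be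
the second smallest eigenvalue of `L`, i.e. the minimum of `zᵀ L z` over unit vectors `z`
orthogonal to `𝟏`.  Then for every color `k` and every `z` with `𝟏ᵀ z = 0`,
`E[‖(I − γ L^k) z‖²] = zᵀ (I − (2/M)(γ − γ²) L) z ≤ (1 − (2/M)(γ − γ²) λ₂) ‖z‖²`. -/
theorem expected_contraction
    {N : ℕ} (G : SimpleGraph (Fin N)) [DecidableRel G.Adj] (hG : G.Connected)
    (M : ℕ) (hM : 0 < M) (γ : ℝ) (hγ : γ ∈ Set.Ioo (0 : ℝ) 1)
    {Ω : Type*} [MeasurableSpace Ω] (μ : Measure Ω) [IsProbabilityMeasure μ]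
    (c : Ω → Sym2 (Fin N) → Fin M)
    (hc_meas : ∀ e : Sym2 (Fin N), Measurable fun ω => c ω e)
    (hc_proper : ∀ᵐ ω ∂μ, ∀ e ∈ G.edgeSet, ∀ e' ∈ G.edgeSet, e ≠ e' →
      (∃ v : Fin N, v ∈ e ∧ v ∈ e') → c ω e ≠ c ω e')
    (hc_unif : ∀ e ∈ G.edgeSet, ∀ k : Fin M,
      μ {ω | c ω e = k} = 1 / (M : ENNReal))
    (lam2 : ℝ)
    (hlam2 : IsLeast {x : ℝ | ∃ z : Fin N → ℝ,
        (∑ i, z i) = 0 ∧ (∑ i, z i ^ 2) = 1 ∧ x = z ⬝ᵥ (lapMat G).mulVec z} lam2) :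
    ∀ (k : Fin M) (z : Fin N → ℝ), (∑ i, z i) = 0 →
      (∫ ω, ∑ i, (((1 : Matrix (Fin N) (Fin N) ℝ) - γ • chLap G (c ω) k).mulVec z i) ^ 2 ∂μ)
        = z ⬝ᵥ ((1 : Matrix (Fin N) (Fin N) ℝ)
            - ((2 / (M : ℝ)) * (γ - γ ^ 2)) • lapMat G).mulVec z ∧
      z ⬝ᵥ ((1 : Matrix (Fin N) (Fin N) ℝ)
            - ((2 / (M : ℝ)) * (γ - γ ^ 2)) • lapMat G).mulVec z
        ≤ (1 - (2 / (M : ℝ)) * (γ - γ ^ 2) * lam2) * (∑ i, z i ^ 2) :=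
  expected_contraction_general G M γ hγ μ c hc_meas hc_proper hc_unif lam2 hlam2
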